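/- Let d denote the toroidal distance on the flat unit square torus. Let q₁ = (13/36, −13/36), q₂ = (11/36, 1/36), q₃ = (1/36, 11/36), q₄ = (−13/36, 13/36), q₅ = (−11/36, −1/36), q₆ = (−1/36, −11/36). Then for every pair of distinct indices i ≠ j with both i, j ∈ {1, 3, 5} or both i, j ∈ {2, 4, 6}, d(qᵢ, qⱼ) = √2/3, and in particular this distance is strictly greater than 5√2/18. Hence the minimum pairwise toroidal distance among the six points is 5√2/18, and the graph on {q₁,…,q₆} with an edge between qᵢ and qⱼ exactly when d(qᵢ,qⱼ) = 5√2/18 is the complete bipartite graph K₃,₃ with parts {q₁, q₃, q₅} and {q₂, q₄, q₆}. -/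
import Mathlib


/-- The toroidal distance on the flat unit square torus: the infimum over integer
translates `(m, n) ∈ ℤ²` of the Euclidean norm of `p - q + (m, n)`. -/
noncomputable def torusDist (p q : ℝ × ℝ) : ℝ :=
  sInf {d : ℝ | ∃ m n : ℤ,
    d = Real.sqrt ((p.1 - q.1 + (m : ℝ)) ^ 2 + (p.2 - q.2 + (n : ℝ)) ^ 2)}

/-- The six centers of the `K₃,₃` toroidal penny graph embedding
(`q₁, …, q₆` are indexed by `0, …, 5`; the parts `{q₁, q₃, q₅}` and `{q₂, q₄, q₆}`
correspond to even and odd indices respectively). -/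
noncomputable def K33pts : Fin 6 → ℝ × ℝ :=
  ![(13/36, -13/36), (11/36, 1/36), (1/36, 11/36),
    (-13/36, 13/36), (-11/36, -1/36), (-1/36, -11/36)]

lemma sq_min (x : ℝ) (hx : |x| ≤ 1/2) (m : ℤ) : x^2 ≤ (x + (m : ℝ))^2 := by
  rcases abs_le.mp hx with ⟨h1, h2⟩
  rcases lt_trichotomy m 0 with h | h | h
  · have hm : (m : ℝ) ≤ -1 := by exact_mod_cast (by omega : m ≤ -1)
    nlinarith [mul_nonneg (by linarith : (0:ℝ) ≤ -(m:ℝ)) (by linarith : (0:ℝ) ≤ -((m:ℝ) + 2*x))]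
  · simp [h]
  · have hm : (1:ℝ) ≤ (m : ℝ) := by exact_mod_cast (by omega : 1 ≤ m)
    nlinarith [mul_nonneg (by linarith : (0:ℝ) ≤ (m:ℝ)) (by linarith : (0:ℝ) ≤ (m:ℝ) + 2*x)]

lemma torusDist_eq (p q : ℝ × ℝ) (a b : ℝ) (k l : ℤ)
    (hk : p.1 - q.1 = a + (k : ℝ)) (hl : p.2 - q.2 = b + (l : ℝ))
    (ha : |a| ≤ 1/2) (hb : |b| ≤ 1/2) :
    torusDist p q = Real.sqrt (a^2 + b^2) := by
  unfold torusDist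
  apply IsLeast.csInf_eq
  constructor
  · refine ⟨-k, -l, ?_⟩
    push_cast
    rw [hk, hl]
    congr 1
    ring
  · rintro d ⟨m, n, rfl⟩
    rw [hk, hl]
    apply Real.sqrt_le_sqrt
    have h1 : a^2 ≤ (a + (k : ℝ) + (m : ℝ))^2 := by
      calc a^2 ≤ (a + ((k + m : ℤ) : ℝ))^2 := sq_min a ha (k + m)
        _ = (a + (k : ℝ) + (m : ℝ))^2 := by push_cast; ring
    have h2 : b^2 ≤ (b + (l : ℝ) + (n : ℝ))^2 := by
      calc b^2 ≤ (b + ((l + n : ℤ) : ℝ))^2 := sq_min b hb (l + n)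
        _ = (b + (l : ℝ) + (n : ℝ))^2 := by push_cast; ring
    linarith

lemma dist_same (p q : ℝ × ℝ) (a b : ℝ) (k l : ℤ)
    (hk : p.1 - q.1 = a + (k : ℝ)) (hl : p.2 - q.2 = b + (l : ℝ))
    (ha : |a| ≤ 1/2) (hb : |b| ≤ 1/2) (hv : a^2 + b^2 = 2/9) :
    torusDist p q = Real.sqrt 2 / 3 := by
  rw [torusDist_eq p q a b k l hk hl ha hb, hv,
    show (2:ℝ)/9 = (Real.sqrt 2 / 3)^2 by
      rw [div_pow, Real.sq_sqrt (by norm_num : (0:ℝ) ≤ 2)]; norm_num,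
    Real.sqrt_sq (by positivity)]

lemma dist_diff (p q : ℝ × ℝ) (a b : ℝ) (k l : ℤ)
    (hk : p.1 - q.1 = a + (k : ℝ)) (hl : p.2 - q.2 = b + (l : ℝ))
    (ha : |a| ≤ 1/2) (hb : |b| ≤ 1/2) (hv : a^2 + b^2 = 25/162) :
    torusDist p q = 5 * Real.sqrt 2 / 18 := by
  rw [torusDist_eq p q a b k l hk hl ha hb, hv,
    show (25:ℝ)/162 = (5 * Real.sqrt 2 / 18)^2 by
      rw [div_pow, mul_pow, Real.sq_sqrt (by norm_num : (0:ℝ) ≤ 2)]; norm_num,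
    Real.sqrt_sq (by positivity)]

lemma key (i j : Fin 6) (h : i ≠ j) :
    torusDist (K33pts i) (K33pts j) =
      if i.val % 2 = j.val % 2 then Real.sqrt 2 / 3 else 5 * Real.sqrt 2 / 18 := by
  fin_cases i
  · fin_cases j
    · exact absurd rfl h
    · rw [if_neg (by decide)]; exact dist_diff _ _ (1/18) (-7/18) (0) (0) (by norm_num [K33pts]) (by norm_num [K33pts]) (by norm_num [abs_le]) (by norm_num [abs_le]) (by norm_num)
    · rw [if_pos (by decide)]; exact dist_same _ _ (1/3) (1/3) (0) (-1) (by norm_num [K33pts]) (by norm_num [K33pts]) (by norm_num [abs_le]) (by norm_num [abs_le]) (by norm_num)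
    · rw [if_neg (by decide)]; exact dist_diff _ _ (-5/18) (5/18) (1) (-1) (by norm_num [K33pts]) (by norm_num [K33pts]) (by norm_num [abs_le]) (by norm_num [abs_le]) (by norm_num)
    · rw [if_pos (by decide)]; exact dist_same _ _ (-1/3) (-1/3) (1) (0) (by norm_num [K33pts]) (by norm_num [K33pts]) (by norm_num [abs_le]) (by norm_num [abs_le]) (by norm_num)
    · rw [if_neg (by decide)]; exact dist_diff _ _ (7/18) (-1/18) (0) (0) (by norm_num [K33pts]) (by norm_num [K33pts]) (by norm_num [abs_le]) (by norm_num [abs_le]) (by norm_num)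
  · fin_cases j
    · rw [if_neg (by decide)]; exact dist_diff _ _ (-1/18) (7/18) (0) (0) (by norm_num [K33pts]) (by norm_num [K33pts]) (by norm_num [abs_le]) (by norm_num [abs_le]) (by norm_num)
    · exact absurd rfl h
    · rw [if_neg (by decide)]; exact dist_diff _ _ (5/18) (-5/18) (0) (0) (by norm_num [K33pts]) (by norm_num [K33pts]) (by norm_num [abs_le]) (by norm_num [abs_le]) (by norm_num)
    · rw [if_pos (by decide)]; exact dist_same _ _ (-1/3) (-1/3) (1) (0) (by norm_num [K33pts]) (by norm_num [K33pts]) (by norm_num [abs_le]) (by norm_num [abs_le]) (by norm_num)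
    · rw [if_neg (by decide)]; exact dist_diff _ _ (-7/18) (1/18) (1) (0) (by norm_num [K33pts]) (by norm_num [K33pts]) (by norm_num [abs_le]) (by norm_num [abs_le]) (by norm_num)
    · rw [if_pos (by decide)]; exact dist_same _ _ (1/3) (1/3) (0) (0) (by norm_num [K33pts]) (by norm_num [K33pts]) (by norm_num [abs_le]) (by norm_num [abs_le]) (by norm_num)
  · fin_cases j
    · rw [if_pos (by decide)]; exact dist_same _ _ (-1/3) (-1/3) (0) (1) (by norm_num [K33pts]) (by norm_num [K33pts]) (by norm_num [abs_le]) (by norm_num [abs_le]) (by norm_num)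
    · rw [if_neg (by decide)]; exact dist_diff _ _ (-5/18) (5/18) (0) (0) (by norm_num [K33pts]) (by norm_num [K33pts]) (by norm_num [abs_le]) (by norm_num [abs_le]) (by norm_num)
    · exact absurd rfl h
    · rw [if_neg (by decide)]; exact dist_diff _ _ (7/18) (-1/18) (0) (0) (by norm_num [K33pts]) (by norm_num [K33pts]) (by norm_num [abs_le]) (by norm_num [abs_le]) (by norm_num)
    · rw [if_pos (by decide)]; exact dist_same _ _ (1/3) (1/3) (0) (0) (by norm_num [K33pts]) (by norm_num [K33pts]) (by norm_num [abs_le]) (by norm_num [abs_le]) (by norm_num)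
    · rw [if_neg (by decide)]; exact dist_diff _ _ (1/18) (-7/18) (0) (1) (by norm_num [K33pts]) (by norm_num [K33pts]) (by norm_num [abs_le]) (by norm_num [abs_le]) (by norm_num)
  · fin_cases j
    · rw [if_neg (by decide)]; exact dist_diff _ _ (5/18) (-5/18) (-1) (1) (by norm_num [K33pts]) (by norm_num [K33pts]) (by norm_num [abs_le]) (by norm_num [abs_le]) (by norm_num)
    · rw [if_pos (by decide)]; exact dist_same _ _ (1/3) (1/3) (-1) (0) (by norm_num [K33pts]) (by norm_num [K33pts]) (by norm_num [abs_le]) (by norm_num [abs_le]) (by norm_num)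
    · rw [if_neg (by decide)]; exact dist_diff _ _ (-7/18) (1/18) (0) (0) (by norm_num [K33pts]) (by norm_num [K33pts]) (by norm_num [abs_le]) (by norm_num [abs_le]) (by norm_num)
    · exact absurd rfl h
    · rw [if_neg (by decide)]; exact dist_diff _ _ (-1/18) (7/18) (0) (0) (by norm_num [K33pts]) (by norm_num [K33pts]) (by norm_num [abs_le]) (by norm_num [abs_le]) (by norm_num)
    · rw [if_pos (by decide)]; exact dist_same _ _ (-1/3) (-1/3) (0) (1) (by norm_num [K33pts]) (by norm_num [K33pts]) (by norm_num [abs_le]) (by norm_num [abs_le]) (by norm_num)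
  · fin_cases j
    · rw [if_pos (by decide)]; exact dist_same _ _ (1/3) (1/3) (-1) (0) (by norm_num [K33pts]) (by norm_num [K33pts]) (by norm_num [abs_le]) (by norm_num [abs_le]) (by norm_num)
    · rw [if_neg (by decide)]; exact dist_diff _ _ (7/18) (-1/18) (-1) (0) (by norm_num [K33pts]) (by norm_num [K33pts]) (by norm_num [abs_le]) (by norm_num [abs_le]) (by norm_num)
    · rw [if_pos (by decide)]; exact dist_same _ _ (-1/3) (-1/3) (0) (0) (by norm_num [K33pts]) (by norm_num [K33pts]) (by norm_num [abs_le]) (by norm_num [abs_le]) (by norm_num)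
    · rw [if_neg (by decide)]; exact dist_diff _ _ (1/18) (-7/18) (0) (0) (by norm_num [K33pts]) (by norm_num [K33pts]) (by norm_num [abs_le]) (by norm_num [abs_le]) (by norm_num)
    · exact absurd rfl h
    · rw [if_neg (by decide)]; exact dist_diff _ _ (-5/18) (5/18) (0) (0) (by norm_num [K33pts]) (by norm_num [K33pts]) (by norm_num [abs_le]) (by norm_num [abs_le]) (by norm_num)
  · fin_cases j
    · rw [if_neg (by decide)]; exact dist_diff _ _ (-7/18) (1/18) (0) (0) (by norm_num [K33pts]) (by norm_num [K33pts]) (by norm_num [abs_le]) (by norm_num [abs_le]) (by norm_num)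
    · rw [if_pos (by decide)]; exact dist_same _ _ (-1/3) (-1/3) (0) (0) (by norm_num [K33pts]) (by norm_num [K33pts]) (by norm_num [abs_le]) (by norm_num [abs_le]) (by norm_num)
    · rw [if_neg (by decide)]; exact dist_diff _ _ (-1/18) (7/18) (0) (-1) (by norm_num [K33pts]) (by norm_num [K33pts]) (by norm_num [abs_le]) (by norm_num [abs_le]) (by norm_num)
    · rw [if_pos (by decide)]; exact dist_same _ _ (1/3) (1/3) (0) (-1) (by norm_num [K33pts]) (by norm_num [K33pts]) (by norm_num [abs_le]) (by norm_num [abs_le]) (by norm_num)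
    · rw [if_neg (by decide)]; exact dist_diff _ _ (5/18) (-5/18) (0) (0) (by norm_num [K33pts]) (by norm_num [K33pts]) (by norm_num [abs_le]) (by norm_num [abs_le]) (by norm_num)
    · exact absurd rfl h

/-- Distinct points within the same part `{q₁, q₃, q₅}` or `{q₂, q₄, q₆}` are at
toroidal distance `√2/3 > 5√2/18`; the minimum pairwise toroidal distance among the
six points is `5√2/18`, and two points are at distance exactly `5√2/18` precisely
when they lie in different parts, so the contact graph is `K₃,₃` with parts
`{q₁, q₃, q₅}` and `{q₂, q₄, q₆}`. -/
theorem K33_same_part_distances_and_contact_graph :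
    (∀ i j : Fin 6, i ≠ j → i.val % 2 = j.val % 2 →
      torusDist (K33pts i) (K33pts j) = Real.sqrt 2 / 3) ∧
    5 * Real.sqrt 2 / 18 < Real.sqrt 2 / 3 ∧
    IsLeast {d : ℝ | ∃ i j : Fin 6, i ≠ j ∧ d = torusDist (K33pts i) (K33pts j)}
      (5 * Real.sqrt 2 / 18) ∧
    (∀ i j : Fin 6, i ≠ j →
      (torusDist (K33pts i) (K33pts j) = 5 * Real.sqrt 2 / 18 ↔
        i.val % 2 ≠ j.val % 2)) := by
  have hlt : 5 * Real.sqrt 2 / 18 < Real.sqrt 2 / 3 := by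
    have h2 : 0 < Real.sqrt 2 := Real.sqrt_pos.mpr (by norm_num)
    linarith
  refine ⟨?_, hlt, ⟨⟨0, 1, by decide, ?_⟩, ?_⟩, ?_⟩
  · intro i j hij hpar
    rw [key i j hij, if_pos hpar]
  · exact (((key 0 1 (by decide)).trans (if_neg (by decide)))).symm
  · rintro d ⟨i, j, hij, rfl⟩
    rw [key i j hij]
    split_ifs
    · exact le_of_lt hlt
    · exact le_refl _
  · intro i j hij
    rw [key i j hij]
    split_ifs with hp
    · exact ⟨fun heq => absurd heq.symm (ne_of_lt hlt), fun hne => absurd hp hne⟩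
    · exact ⟨fun _ => hp, fun _ => rfl⟩
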